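/- The γ₂ norm of a matrix M equals the γ₂ norm of M restricted via equality: if two matrices are equal then their γ₂ norms are equal, and γ₂(M) ≤ √(rank(M)) for any sign matrix M (entries ±1). -/

import Mathlib

/-!
Factor `M = A * B` where the `r = rank M` columns of `A` are independent. Among weights `w` in
the simplex on the rows, pick one maximizing `det S` with `S = Aᵀ diag(w) A` (a D-optimal design,
the dual of John's ellipsoid). Moving weight towards a row `aᵢ` cannot increase `det S`, and the
matrix determinant lemma turns this first-order condition into `aᵢᵀ S⁻¹ aᵢ ≤ r`. Writing
`S = Cᵀ C`, the factorization `M = (A C⁻¹) (C B)` then has rows of squared norm `aᵢᵀ S⁻¹ aᵢ ≤ r`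
on the left and columns of squared norm `∑ᵢ wᵢ Mᵢⱼ² ≤ 1` on the right.
-/
open Matrix Finset

noncomputable def rowNormMax {X J : Type*} [Fintype J] (A : Matrix X J ℝ) : ℝ :=
  ⨆ i, Real.sqrt (∑ j, A i j ^ 2)

noncomputable def colNormMax {J Y : Type*} [Fintype J] (B : Matrix J Y ℝ) : ℝ :=
  ⨆ j, Real.sqrt (∑ i, B i j ^ 2)

/-- The `γ₂` (factorization) norm of a real matrix. -/
noncomputable def gamma2 {X Y : Type*} [Fintype X] [Fintype Y] (M : Matrix X Y ℝ) : ℝ :=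
  sInf {c | ∃ (r : ℕ) (A : Matrix X (Fin r) ℝ) (B : Matrix (Fin r) Y ℝ),
    M = A * B ∧ c = rowNormMax A * colNormMax B}

lemma sum_sq_mul_apply_row {X K L : Type*} [Fintype K] [Fintype L] (A : Matrix X K ℝ)
    (C : Matrix K L ℝ) (i : X) : ∑ l, (A * C) i l ^ 2 = A i ⬝ᵥ (C * Cᵀ) *ᵥ A i := by
  rw [← mulVec_mulVec, dotProduct_mulVec, mulVec_transpose]
  simp [dotProduct, sq, vecMul, mul_apply]

lemma sum_sq_mul_apply_col {Y K L : Type*} [Fintype K] [Fintype L] (C : Matrix L K ℝ)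
    (B : Matrix K Y ℝ) (j : Y) : ∑ l, (C * B) l j ^ 2 = Bᵀ j ⬝ᵥ (Cᵀ * C) *ᵥ Bᵀ j := by
  simpa [← transpose_mul] using sum_sq_mul_apply_row Bᵀ Cᵀ j

lemma Matrix.det_add_smul_vecMulVec {K n : Type*} [Field K] [Fintype n] [DecidableEq n]
    {S : Matrix n n K} (hS : IsUnit S.det) (s : K) (u v : n → K) :
    (S + s • vecMulVec u v).det = S.det * (1 + s * (v ⬝ᵥ S⁻¹ *ᵥ u)) := by
  rw [← smul_vecMulVec, vecMulVec_eq Unit, det_add_replicateCol_mul_replicateRow hS]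
  congr 1
  rw [det_unique, Matrix.mul_assoc, ← replicateCol_mulVec, add_apply, one_apply_eq,
    replicateRow_mul_replicateCol_apply, mulVec_smul, dotProduct_smul, smul_eq_mul]

lemma le_of_forall_one_add_mul_le_pow {q : ℝ} {r : ℕ} (h : ∀ s > 0, 1 + s * q ≤ (1 + s) ^ r) :
    q ≤ r := by
  have hderiv : HasDerivAt (fun s : ℝ => (1 + s) ^ r) r 0 := by
    simpa using ((hasDerivAt_id (0 : ℝ)).const_add 1).fun_pow r
  have hslope := (hasDerivAt_iff_tendsto_slope.mp hderiv).mono_left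
    (nhdsWithin_mono _ fun s (hs : s ∈ Set.Ioi 0) => ne_of_gt hs)
  refine ge_of_tendsto hslope ?_
  filter_upwards [self_mem_nhdsWithin] with s (hs : 0 < s)
  rw [slope_def_field, sub_zero, le_div_iff₀ hs, add_zero, one_pow]
  linarith [h s hs]

theorem Matrix.exists_rank_factorization {K X Y : Type*} [Field K] [Fintype Y]
    (M : Matrix X Y K) : ∃ (A : Matrix X (Fin M.rank) K) (B : Matrix (Fin M.rank) Y K),
      M = A * B ∧ Function.Injective A.mulVec := by
  classical
  let v : Module.Basis (Fin M.rank) K (LinearMap.range M.mulVecLin) :=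
    Module.finBasisOfFinrankEq K _ rfl
  let A : Matrix X (Fin M.rank) K := of fun i k => (v k : X → K) i
  have hA : ∀ x, A *ᵥ x = v.equivFun.symm x := fun x => by
    ext i
    rw [Module.Basis.equivFun_symm_apply]
    simp [A, mulVec, dotProduct, mul_comm]
  have hcol : ∀ j, Mᵀ j ∈ LinearMap.range M.mulVecLin := fun j =>
    ⟨Pi.single j 1, by ext; simp⟩
  refine ⟨A, of fun k j => v.equivFun ⟨Mᵀ j, hcol j⟩ k, ?_, ?_⟩
  · ext i j
    change Mᵀ j i = (A *ᵥ v.equivFun ⟨Mᵀ j, hcol j⟩) i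
    rw [hA, LinearEquiv.symm_apply_apply]
  · intro x y hxy
    rw [hA, hA] at hxy
    exact v.equivFun.symm.injective (Subtype.val_injective hxy)

lemma rowNormMax_nonneg {X J : Type*} [Fintype J] (A : Matrix X J ℝ) : 0 ≤ rowNormMax A :=
  Real.iSup_nonneg fun _ => Real.sqrt_nonneg _

lemma colNormMax_nonneg {J Y : Type*} [Fintype J] (B : Matrix J Y ℝ) : 0 ≤ colNormMax B :=
  Real.iSup_nonneg fun _ => Real.sqrt_nonneg _

section Gamma2

variable {X Y : Type*} [Fintype X] [Fintype Y]

lemma gamma2_le_of_eq_mul {M : Matrix X Y ℝ} {r : ℕ} {A : Matrix X (Fin r) ℝ}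
    {B : Matrix (Fin r) Y ℝ} (h : M = A * B) : gamma2 M ≤ rowNormMax A * colNormMax B := by
  refine csInf_le ⟨0, ?_⟩ ⟨r, A, B, h, rfl⟩
  rintro _ ⟨r, A, B, -, rfl⟩
  exact mul_nonneg (rowNormMax_nonneg A) (colNormMax_nonneg B)

lemma gamma2_nonpos_of_isEmpty [IsEmpty X] (M : Matrix X Y ℝ) : gamma2 M ≤ 0 := by
  have h : M = (0 : Matrix X (Fin 0) ℝ) * (0 : Matrix (Fin 0) Y ℝ) := Subsingleton.elim _ _
  have hrow : rowNormMax (0 : Matrix X (Fin 0) ℝ) = 0 := Real.iSup_of_isEmpty _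
  simpa [hrow] using gamma2_le_of_eq_mul h

open scoped MatrixOrder in
lemma gamma2_mul_le_of_posDef {r : ℕ}
    (A : Matrix X (Fin r) ℝ) (B : Matrix (Fin r) Y ℝ) {S : Matrix (Fin r) (Fin r) ℝ}
    (hS : S.PosDef) {a b : ℝ} (ha : ∀ i, A i ⬝ᵥ S⁻¹ *ᵥ A i ≤ a)
    (hb : ∀ j, Bᵀ j ⬝ᵥ S *ᵥ Bᵀ j ≤ b) : gamma2 (A * B) ≤ √a * √b := by
  obtain ⟨C, hC⟩ := CStarAlgebra.nonneg_iff_eq_star_mul_self.mp hS.posSemidef.nonneg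
  rw [star_eq_conjTranspose, conjTranspose_eq_transpose_of_trivial] at hC
  have hCdet : IsUnit C.det := by
    have := hS.isUnit
    rw [isUnit_iff_isUnit_det, hC, det_mul, det_transpose] at this
    exact isUnit_of_mul_isUnit_left this
  have hfact : A * B = A * C⁻¹ * (C * B) := by
    rw [Matrix.mul_assoc, Matrix.nonsing_inv_mul_cancel_left _ _ hCdet]
  have hrow : rowNormMax (A * C⁻¹) ≤ √a := by
    refine Real.iSup_le (fun i => Real.sqrt_le_sqrt ?_) (Real.sqrt_nonneg _)
    rw [sum_sq_mul_apply_row, transpose_nonsing_inv, ← Matrix.mul_inv_rev, ← hC]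
    exact ha i
  have hcol : colNormMax (C * B) ≤ √b := by
    refine Real.iSup_le (fun j => Real.sqrt_le_sqrt ?_) (Real.sqrt_nonneg _)
    rw [sum_sq_mul_apply_col, ← hC]
    exact hb j
  calc gamma2 (A * B) ≤ rowNormMax (A * C⁻¹) * colNormMax (C * B) := gamma2_le_of_eq_mul hfact
    _ ≤ √a * √b := mul_le_mul hrow hcol (colNormMax_nonneg _) (Real.sqrt_nonneg _)

end Gamma2

section WeightedGram

variable {X R : Type*} [Fintype X] [DecidableEq X]

noncomputable def weightedGram (A : Matrix X R ℝ) (w : X → ℝ) : Matrix R R ℝ :=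
  Aᵀ * diagonal w * A

variable (A : Matrix X R ℝ)

lemma weightedGram_add (w w' : X → ℝ) :
    weightedGram A (w + w') = weightedGram A w + weightedGram A w' := by
  rw [weightedGram, weightedGram, weightedGram, Pi.add_def, ← diagonal_add, Matrix.mul_add,
    Matrix.add_mul]

lemma weightedGram_smul (c : ℝ) (w : X → ℝ) :
    weightedGram A (c • w) = c • weightedGram A w := by
  rw [weightedGram, weightedGram, diagonal_smul, Matrix.mul_smul, Matrix.smul_mul]

lemma weightedGram_single (i : X) (c : ℝ) :
    weightedGram A (Pi.single i c) = c • vecMulVec (A i) (A i) := by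
  ext k l
  simp [weightedGram, mul_apply, diagonal_apply, Pi.single_apply, vecMulVec_apply]
  ring

lemma dotProduct_weightedGram_mulVec [Fintype R] (w : X → ℝ) (x : R → ℝ) :
    x ⬝ᵥ weightedGram A w *ᵥ x = ∑ i, w i * (A *ᵥ x) i ^ 2 := by
  rw [weightedGram, ← mulVec_mulVec, ← mulVec_mulVec, dotProduct_mulVec, ← mulVec_transpose,
    transpose_transpose]
  simp only [dotProduct, mulVec_diagonal, sq]
  exact Finset.sum_congr rfl fun i _ => by ring

lemma posSemidef_weightedGram [Fintype R] {w : X → ℝ} (hw : 0 ≤ w) :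
    (weightedGram A w).PosSemidef := by
  simpa [weightedGram] using (posSemidef_diagonal_iff.mpr hw).conjTranspose_mul_mul_same A

lemma posDef_weightedGram [Fintype R] {w : X → ℝ} (hw : ∀ i, 0 < w i)
    (hA : Function.Injective A.mulVec) : (weightedGram A w).PosDef := by
  simpa [weightedGram] using (posDef_diagonal_iff.mpr hw).conjTranspose_mul_mul_same hA

lemma continuous_det_weightedGram [Fintype R] [DecidableEq R] :
    Continuous fun w => (weightedGram A w).det := by
  unfold weightedGram
  fun_prop

end WeightedGram

section OptimalDesign

variable {X : Type*} [Fintype X] [DecidableEq X] {r : ℕ} (A : Matrix X (Fin r) ℝ)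

lemma dotProduct_inv_weightedGram_mulVec_le {w : X → ℝ}
    (hmax : IsMaxOn (fun w => (weightedGram A w).det) (stdSimplex ℝ X) w)
    (hw : w ∈ stdSimplex ℝ X) (hdet : 0 < (weightedGram A w).det) (i : X) :
    A i ⬝ᵥ (weightedGram A w)⁻¹ *ᵥ A i ≤ r := by
  set S := weightedGram A w
  refine le_of_forall_one_add_mul_le_pow fun s hs => ?_
  have hmem : (1 + s)⁻¹ • (w + s • Pi.single i 1) ∈ stdSimplex ℝ X := by
    have h := convex_stdSimplex ℝ X hw (single_mem_stdSimplex ℝ i)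
      (a := (1 + s)⁻¹) (b := s * (1 + s)⁻¹) (by positivity) (by positivity) (by field_simp)
    rwa [smul_add, smul_smul, mul_comm (1 + s)⁻¹]
  have hdet_s : (weightedGram A ((1 + s)⁻¹ • (w + s • Pi.single i 1))).det
      = ((1 + s) ^ r)⁻¹ * (S.det * (1 + s * (A i ⬝ᵥ S⁻¹ *ᵥ A i))) := by
    rw [weightedGram_smul, weightedGram_add, weightedGram_smul, weightedGram_single, one_smul,
      det_smul, det_add_smul_vecMulVec hdet.ne'.isUnit, Fintype.card_fin, inv_pow]
  have hle : (weightedGram A _).det ≤ S.det := hmax hmem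
  rw [hdet_s, inv_mul_le_iff₀ (by positivity), mul_comm ((1 + s) ^ r)] at hle
  exact le_of_mul_le_mul_left hle hdet

theorem exists_posDef_weightedGram_forall_le [Nonempty X] (hA : Function.Injective A.mulVec) :
    ∃ w ∈ stdSimplex ℝ X, (weightedGram A w).PosDef ∧
      ∀ i, A i ⬝ᵥ (weightedGram A w)⁻¹ *ᵥ A i ≤ r := by
  obtain ⟨w, hw, hmax⟩ := (isCompact_stdSimplex ℝ X).exists_isMaxOn
    ⟨_, single_mem_stdSimplex ℝ (Classical.arbitrary X)⟩
    (continuous_det_weightedGram A).continuousOn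
  have hunif : (fun _ => (Fintype.card X : ℝ)⁻¹) ∈ stdSimplex ℝ X :=
    ⟨fun _ => by positivity, by simp⟩
  have hdet : 0 < (weightedGram A w).det :=
    ((posDef_weightedGram A (fun _ => by positivity) hA).det_pos).trans_le (hmax hunif)
  exact ⟨w, hw, (posSemidef_weightedGram A hw.1).posDef_iff_det_ne_zero.mpr hdet.ne',
    dotProduct_inv_weightedGram_mulVec_le A hmax hw hdet⟩

end OptimalDesign

theorem gamma2_le_sqrt_rank {X Y : Type*} [Fintype X] [Fintype Y] (M : Matrix X Y ℝ)
    (hM : ∀ i j, |M i j| ≤ 1) : gamma2 M ≤ √M.rank := by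
  classical
  rcases isEmpty_or_nonempty X with hX | hX
  · exact (gamma2_nonpos_of_isEmpty M).trans (Real.sqrt_nonneg _)
  obtain ⟨A, B, hAB, hA⟩ := M.exists_rank_factorization
  obtain ⟨w, hw, hS, hrow⟩ := exists_posDef_weightedGram_forall_le A hA
  have hcol : ∀ j, Bᵀ j ⬝ᵥ weightedGram A w *ᵥ Bᵀ j ≤ 1 := fun j => by
    have hentry : ∀ i, (A *ᵥ Bᵀ j) i = M i j := fun i =>
      (congrFun (congrFun hAB i) j).symm
    rw [dotProduct_weightedGram_mulVec, ← hw.2]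
    refine Finset.sum_le_sum fun i _ => mul_le_of_le_one_right (hw.1 i) ?_
    rw [hentry, sq_le_one_iff_abs_le_one]
    exact hM i j
  calc gamma2 M = gamma2 (A * B) := congrArg gamma2 hAB
    _ ≤ √M.rank * √1 := gamma2_mul_le_of_posDef A B hS hrow hcol
    _ = √M.rank := by rw [Real.sqrt_one, mul_one]

/-- `γ₂` respects equality of matrices, and for any sign matrix `M` (entries `±1`),
`γ₂(M) ≤ √(rank M)`. -/
theorem gamma2_congr_and_le_sqrt_rank {m n : ℕ} (M : Matrix (Fin m) (Fin n) ℝ) :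
    (∀ N : Matrix (Fin m) (Fin n) ℝ, M = N → gamma2 M = gamma2 N) ∧
    ((∀ i j, M i j = 1 ∨ M i j = -1) → gamma2 M ≤ Real.sqrt (M.rank)) :=
  ⟨fun _ h => congrArg gamma2 h, fun hM => gamma2_le_sqrt_rank M fun i j => by
    rcases hM i j with h | h <;> simp [h]⟩
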